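/- Let σ₁, σ₂, σ₀ : [0,1] → [κ,K] with 0 < κ < K, let t_{i,n} = i/n, and for j = 1,2 define Q_n(σ_j) = |T_{2,n}(σ_j) + (1/2)∫₀¹ (σ₀² − σ_j²)/σ_j² du| where T_{2,n}(σ) = −(1/(2n))∑_{i=1}^n (Δ_i X)² [1/∫_{t_{i-1,n}}^{t_{i,n}} σ² du − 1/∫_{t_{i-1,n}}^{t_{i,n}} σ₀² du] with Δ_i X = X_{t_{i,n}} − X_{t_{i-1,n}}. Then |Q_n(σ₁) − Q_n(σ₂)| ≤ (K/κ⁴)‖σ₁−σ₂‖_∞ · ∑_{i=1}^n (Δ_i X)² + (K³/κ⁴)‖σ₁−σ₂‖_∞. -/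

import Mathlib

/-!
By the reverse triangle inequality it suffices to bound `|T σ₁ - T σ₂|` and the difference of
the two correction integrals. In `T σ₁ - T σ₂` the `σ₀`-terms cancel; on each cell of length
`1/n` both integrals `∫ σⱼ²` are at least `κ²/n` and differ by at most `2K‖σ₁ - σ₂‖/n`, so
their reciprocals differ by at most `2Kn‖σ₁ - σ₂‖/κ⁴`. The difference of the correction
integrands is `σ₀² (σ₁⁻² - σ₂⁻²)`, which is at most `2K³‖σ₁ - σ₂‖/κ⁴` in absolute value.
-/

open MeasureTheory Set

lemma abs_sq_sub_sq_le_of_abs_sub_le {x y K M : ℝ} (hx : |x| ≤ K) (hy : |y| ≤ K)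
    (hxy : |x - y| ≤ M) : |x ^ 2 - y ^ 2| ≤ 2 * K * M := by
  rw [sq_sub_sq, abs_mul]
  exact mul_le_mul ((abs_add_le x y).trans (by linarith)) hxy (abs_nonneg _)
    (by linarith [abs_nonneg x])

lemma abs_inv_sub_inv_le {x y m : ℝ} (hm : 0 < m) (hx : m ≤ x) (hy : m ≤ y) :
    |x⁻¹ - y⁻¹| ≤ |x - y| / m ^ 2 := by
  have hx₀ : 0 < x := hm.trans_le hx
  have hy₀ : 0 < y := hm.trans_le hy
  rw [inv_sub_inv hx₀.ne' hy₀.ne', abs_div, abs_sub_comm, abs_of_pos (mul_pos hx₀ hy₀), sq]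
  exact div_le_div_of_nonneg_left (abs_nonneg _) (by positivity)
    (mul_le_mul hx hy hm.le hx₀.le)

lemma abs_le_of_mem_Icc {x κ K : ℝ} (hκ : 0 ≤ κ) (hx : x ∈ Icc κ K) : |x| ≤ K :=
  abs_le.2 ⟨by linarith [hx.1, hx.2], hx.2⟩

lemma sq_mem_Icc_sq {x κ K : ℝ} (hκ : 0 ≤ κ) (hx : x ∈ Icc κ K) : x ^ 2 ∈ Icc (κ ^ 2) (K ^ 2) :=
  ⟨pow_le_pow_left₀ hκ hx.1 2, pow_le_pow_left₀ (hκ.trans hx.1) hx.2 2⟩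

lemma abs_sub_le_iSup_abs_sub {σ₁ σ₂ : ℝ → ℝ} {s : Set ℝ} {κ K : ℝ}
    (hσ₁ : ∀ u ∈ s, σ₁ u ∈ Icc κ K) (hσ₂ : ∀ u ∈ s, σ₂ u ∈ Icc κ K) {u : ℝ} (hu : u ∈ s) :
    |σ₁ u - σ₂ u| ≤ ⨆ v : s, |σ₁ v - σ₂ v| := by
  refine le_ciSup (f := fun v : s => |σ₁ v - σ₂ v|) ⟨K - κ, ?_⟩ ⟨u, hu⟩
  rintro _ ⟨v, rfl⟩
  have h₁ := hσ₁ v v.2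
  have h₂ := hσ₂ v v.2
  exact abs_sub_le_iff.2 ⟨by linarith [h₁.2, h₂.1], by linarith [h₁.1, h₂.2]⟩

lemma abs_mul_sum_sub_mul_sum_le {ι : Type*} (s : Finset ι) (c C : ℝ) (w x y z : ι → ℝ)
    (hw : ∀ i ∈ s, 0 ≤ w i) (hxy : ∀ i ∈ s, |x i - y i| ≤ C) :
    |c * ∑ i ∈ s, w i * (x i - z i) - c * ∑ i ∈ s, w i * (y i - z i)| ≤
      |c| * (C * ∑ i ∈ s, w i) := by
  have hcancel : c * ∑ i ∈ s, w i * (x i - z i) - c * ∑ i ∈ s, w i * (y i - z i) =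
      c * ∑ i ∈ s, w i * (x i - y i) := by
    rw [← mul_sub, ← Finset.sum_sub_distrib]
    exact congrArg _ (Finset.sum_congr rfl fun i _ => by ring)
  rw [hcancel, abs_mul]
  gcongr
  calc |∑ i ∈ s, w i * (x i - y i)| ≤ ∑ i ∈ s, |w i * (x i - y i)| :=
        Finset.abs_sum_le_sum_abs _ _
    _ ≤ ∑ i ∈ s, w i * C := Finset.sum_le_sum fun i hi => by
        rw [abs_mul, abs_of_nonneg (hw i hi)]
        exact mul_le_mul_of_nonneg_left (hxy i hi) (hw i hi)
    _ = C * ∑ i ∈ s, w i := by rw [← Finset.sum_mul, mul_comm]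

lemma abs_sq_sub_sq_div_sq_le {κ K x z : ℝ} (hκ : 0 < κ) (hx : x ∈ Icc κ K) (hz : z ∈ Icc κ K) :
    |(z ^ 2 - x ^ 2) / x ^ 2| ≤ K ^ 2 / κ ^ 2 := by
  have hxsq := sq_mem_Icc_sq hκ.le hx
  have hzsq := sq_mem_Icc_sq hκ.le hz
  have hx₀ : 0 < x ^ 2 := (pow_pos hκ 2).trans_le hxsq.1
  rw [abs_div, abs_of_pos hx₀]
  exact div_le_div₀ (by positivity)
    (abs_sub_le_iff.2 ⟨by linarith [hzsq.2, hxsq.1, sq_nonneg κ],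
      by linarith [hzsq.1, hxsq.2, sq_nonneg κ]⟩)
    (by positivity) hxsq.1

lemma grid_cell_bounds {n i : ℕ} (hi : i ∈ Finset.Icc 1 n) :
    0 ≤ ((i : ℝ) - 1) / n ∧ ((i : ℝ) - 1) / n < i / n ∧ (i : ℝ) / n ≤ 1 := by
  obtain ⟨hi₁, hin⟩ := Finset.mem_Icc.1 hi
  have hn : (0 : ℝ) < n := by exact_mod_cast hi₁.trans hin
  have hi₁' : (1 : ℝ) ≤ i := by exact_mod_cast hi₁
  have hin' : (i : ℝ) ≤ n := by exact_mod_cast hin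
  exact ⟨div_nonneg (by linarith) hn.le, by gcongr; linarith, (div_le_one hn).2 hin'⟩

section Integrals

variable {a b κ K : ℝ}

lemma intervalIntegrable_of_abs_le {f : ℝ → ℝ} {C : ℝ} (hab : a ≤ b) (hf : Measurable f)
    (hC : ∀ u ∈ Icc a b, |f u| ≤ C) : IntervalIntegrable f volume a b := by
  refine (intervalIntegrable_const (c := C)).mono_fun' hf.aestronglyMeasurable
    ((ae_restrict_iff' measurableSet_uIoc).2 (ae_of_all _ fun u hu => ?_))
  rw [uIoc_of_le hab] at hu
  exact hC u (Ioc_subset_Icc_self hu)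

lemma abs_integral_sub_integral_le {f g : ℝ → ℝ} {C : ℝ} (hab : a ≤ b)
    (hf : IntervalIntegrable f volume a b) (hg : IntervalIntegrable g volume a b)
    (hC : ∀ u ∈ Icc a b, |f u - g u| ≤ C) :
    |(∫ u in a..b, f u) - ∫ u in a..b, g u| ≤ C * (b - a) := by
  rw [← intervalIntegral.integral_sub hf hg]
  have h := intervalIntegral.norm_integral_le_of_norm_le_const (a := a) (b := b)
    (f := fun u => f u - g u) fun u hu => hC u (by
      rw [uIoc_of_le hab] at hu
      exact Ioc_subset_Icc_self hu)
  rwa [Real.norm_eq_abs, abs_of_nonneg (sub_nonneg.2 hab)] at h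

variable {σ σ₀ σ₁ σ₂ : ℝ → ℝ} {M : ℝ}

lemma intervalIntegrable_sq (hκ : 0 ≤ κ) (hab : a ≤ b) (hσm : Measurable σ)
    (hσ : ∀ u ∈ Icc a b, σ u ∈ Icc κ K) : IntervalIntegrable (fun u => σ u ^ 2) volume a b :=
  intervalIntegrable_of_abs_le hab (hσm.pow_const 2) fun u hu => by
    rw [abs_of_nonneg (sq_nonneg _)]
    exact (sq_mem_Icc_sq hκ (hσ u hu)).2

lemma mul_sub_le_integral_sq (hκ : 0 ≤ κ) (hab : a ≤ b) (hσm : Measurable σ)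
    (hσ : ∀ u ∈ Icc a b, σ u ∈ Icc κ K) : κ ^ 2 * (b - a) ≤ ∫ u in a..b, σ u ^ 2 := by
  have h := intervalIntegral.integral_mono_on hab intervalIntegrable_const
    (intervalIntegrable_sq hκ hab hσm hσ) fun u hu => (sq_mem_Icc_sq hκ (hσ u hu)).1
  simpa [mul_comm] using h

lemma abs_inv_integral_sq_sub_inv_integral_sq_le (hκ : 0 < κ) (hab : a < b)
    (hσ₁m : Measurable σ₁) (hσ₂m : Measurable σ₂)
    (hσ₁ : ∀ u ∈ Icc a b, σ₁ u ∈ Icc κ K) (hσ₂ : ∀ u ∈ Icc a b, σ₂ u ∈ Icc κ K)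
    (hM : ∀ u ∈ Icc a b, |σ₁ u - σ₂ u| ≤ M) :
    |(∫ u in a..b, σ₁ u ^ 2)⁻¹ - (∫ u in a..b, σ₂ u ^ 2)⁻¹| ≤ 2 * K * M / (κ ^ 4 * (b - a)) := by
  have hdiff : |(∫ u in a..b, σ₁ u ^ 2) - ∫ u in a..b, σ₂ u ^ 2| ≤ 2 * K * M * (b - a) :=
    abs_integral_sub_integral_le hab.le (intervalIntegrable_sq hκ.le hab.le hσ₁m hσ₁)
      (intervalIntegrable_sq hκ.le hab.le hσ₂m hσ₂) fun u hu =>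
        abs_sq_sub_sq_le_of_abs_sub_le (abs_le_of_mem_Icc hκ.le (hσ₁ u hu))
          (abs_le_of_mem_Icc hκ.le (hσ₂ u hu)) (hM u hu)
  have hba : 0 < b - a := sub_pos.2 hab
  calc _ ≤ |(∫ u in a..b, σ₁ u ^ 2) - ∫ u in a..b, σ₂ u ^ 2| / (κ ^ 2 * (b - a)) ^ 2 :=
        abs_inv_sub_inv_le (by positivity) (mul_sub_le_integral_sq hκ.le hab.le hσ₁m hσ₁)
          (mul_sub_le_integral_sq hκ.le hab.le hσ₂m hσ₂)
    _ ≤ 2 * K * M * (b - a) / (κ ^ 2 * (b - a)) ^ 2 := by gcongr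
    _ = 2 * K * M / (κ ^ 4 * (b - a)) := by field_simp

lemma abs_one_div_grid_integral_sq_sub_le {n i : ℕ} (hκ : 0 < κ) (hσ₁m : Measurable σ₁)
    (hσ₂m : Measurable σ₂) (hσ₁ : ∀ u ∈ Icc (0 : ℝ) 1, σ₁ u ∈ Icc κ K)
    (hσ₂ : ∀ u ∈ Icc (0 : ℝ) 1, σ₂ u ∈ Icc κ K) (hM : ∀ u ∈ Icc (0 : ℝ) 1, |σ₁ u - σ₂ u| ≤ M)
    (hi : i ∈ Finset.Icc 1 n) :
    |1 / (∫ u in ((i : ℝ) - 1) / n..(i : ℝ) / n, σ₁ u ^ 2) -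
        1 / (∫ u in ((i : ℝ) - 1) / n..(i : ℝ) / n, σ₂ u ^ 2)| ≤ 2 * K * M * n / κ ^ 4 := by
  obtain ⟨h₀, hlt, h₁⟩ := grid_cell_bounds hi
  have hsub := Icc_subset_Icc h₀ h₁
  simp only [one_div]
  refine (abs_inv_integral_sq_sub_inv_integral_sq_le hκ hlt hσ₁m hσ₂m
    (fun u hu => hσ₁ u (hsub hu)) (fun u hu => hσ₂ u (hsub hu))
    fun u hu => hM u (hsub hu)).trans_eq ?_
  field_simp
  ring

lemma abs_integral_sq_sub_sq_div_sq_sub_le (hκ : 0 < κ) (hab : a ≤ b)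
    (hσ₀m : Measurable σ₀) (hσ₁m : Measurable σ₁) (hσ₂m : Measurable σ₂)
    (hσ₀ : ∀ u ∈ Icc a b, σ₀ u ∈ Icc κ K) (hσ₁ : ∀ u ∈ Icc a b, σ₁ u ∈ Icc κ K)
    (hσ₂ : ∀ u ∈ Icc a b, σ₂ u ∈ Icc κ K) (hM : ∀ u ∈ Icc a b, |σ₁ u - σ₂ u| ≤ M) :
    |(∫ u in a..b, (σ₀ u ^ 2 - σ₁ u ^ 2) / σ₁ u ^ 2) -
        ∫ u in a..b, (σ₀ u ^ 2 - σ₂ u ^ 2) / σ₂ u ^ 2| ≤ 2 * K ^ 3 * M / κ ^ 4 * (b - a) := by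
  have hint : ∀ σ : ℝ → ℝ, Measurable σ → (∀ u ∈ Icc a b, σ u ∈ Icc κ K) →
      IntervalIntegrable (fun u => (σ₀ u ^ 2 - σ u ^ 2) / σ u ^ 2) volume a b :=
    fun σ hσm hσ => intervalIntegrable_of_abs_le hab
      (((hσ₀m.pow_const 2).sub (hσm.pow_const 2)).div (hσm.pow_const 2))
      fun u hu => abs_sq_sub_sq_div_sq_le hκ (hσ u hu) (hσ₀ u hu)
  refine abs_integral_sub_integral_le hab (hint σ₁ hσ₁m hσ₁) (hint σ₂ hσ₂m hσ₂) fun u hu => ?_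
  have h₀ := sq_mem_Icc_sq hκ.le (hσ₀ u hu)
  have h₁ := sq_mem_Icc_sq hκ.le (hσ₁ u hu)
  have h₂ := sq_mem_Icc_sq hκ.le (hσ₂ u hu)
  have hκsq : 0 < κ ^ 2 := pow_pos hκ 2
  have hfactor : (σ₀ u ^ 2 - σ₁ u ^ 2) / σ₁ u ^ 2 - (σ₀ u ^ 2 - σ₂ u ^ 2) / σ₂ u ^ 2 =
      σ₀ u ^ 2 * ((σ₁ u ^ 2)⁻¹ - (σ₂ u ^ 2)⁻¹) := by
    field_simp [(hκ.trans_le (hσ₁ u hu).1).ne', (hκ.trans_le (hσ₂ u hu).1).ne']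
    ring
  rw [hfactor, abs_mul, abs_of_nonneg (hκsq.le.trans h₀.1)]
  calc σ₀ u ^ 2 * |(σ₁ u ^ 2)⁻¹ - (σ₂ u ^ 2)⁻¹| ≤ K ^ 2 * (2 * K * M / (κ ^ 2) ^ 2) := by
        refine mul_le_mul h₀.2 ((abs_inv_sub_inv_le hκsq h₁.1 h₂.1).trans ?_) (abs_nonneg _)
          (by positivity)
        gcongr
        exact abs_sq_sub_sq_le_of_abs_sub_le (abs_le_of_mem_Icc hκ.le (hσ₁ u hu))
          (abs_le_of_mem_Icc hκ.le (hσ₂ u hu)) (hM u hu)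
    _ = 2 * K ^ 3 * M / κ ^ 4 := by ring

end Integrals

theorem Qn_lipschitz_in_sigma_general (κ K : ℝ) (hκ : 0 < κ)
    (σ₀ σ₁ σ₂ : ℝ → ℝ) (hσ₀ : Measurable σ₀) (hσ₁ : Measurable σ₁)
    (hσ₂ : Measurable σ₂)
    (hσ₀b : ∀ u ∈ Set.Icc (0:ℝ) 1, σ₀ u ∈ Set.Icc κ K)
    (hσ₁b : ∀ u ∈ Set.Icc (0:ℝ) 1, σ₁ u ∈ Set.Icc κ K)
    (hσ₂b : ∀ u ∈ Set.Icc (0:ℝ) 1, σ₂ u ∈ Set.Icc κ K)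
    (X : ℝ → ℝ) (n : ℕ) (hn : 0 < n)
    (T : (ℝ → ℝ) → ℝ)
    (hT : ∀ σ : ℝ → ℝ, T σ =
      -(1 / (2 * (n : ℝ))) * ∑ i ∈ Finset.Icc 1 n,
        (X ((i : ℝ) / n) - X (((i : ℝ) - 1) / n)) ^ 2 *
          (1 / (∫ u in ((i : ℝ) - 1) / n..(i : ℝ) / n, σ u ^ 2) -
           1 / (∫ u in ((i : ℝ) - 1) / n..(i : ℝ) / n, σ₀ u ^ 2)))
    (Q : (ℝ → ℝ) → ℝ)
    (hQ : ∀ σ : ℝ → ℝ, Q σ =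
      |T σ + (1 / 2) * ∫ u in (0:ℝ)..1, (σ₀ u ^ 2 - σ u ^ 2) / σ u ^ 2|) :
    |Q σ₁ - Q σ₂| ≤
      (K / κ ^ 4) * (⨆ u : Set.Icc (0:ℝ) 1, |σ₁ u - σ₂ u|) *
        (∑ i ∈ Finset.Icc 1 n, (X ((i : ℝ) / n) - X (((i : ℝ) - 1) / n)) ^ 2) +
      (K ^ 3 / κ ^ 4) * ⨆ u : Set.Icc (0:ℝ) 1, |σ₁ u - σ₂ u| := by
  set M := ⨆ u : Set.Icc (0:ℝ) 1, |σ₁ u - σ₂ u|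
  have hM : ∀ u ∈ Icc (0:ℝ) 1, |σ₁ u - σ₂ u| ≤ M := fun u hu =>
    abs_sub_le_iSup_abs_sub hσ₁b hσ₂b hu
  have hT₁₂ : |T σ₁ - T σ₂| ≤ K / κ ^ 4 * M *
      ∑ i ∈ Finset.Icc 1 n, (X ((i : ℝ) / n) - X (((i : ℝ) - 1) / n)) ^ 2 := by
    rw [hT, hT]
    refine (abs_mul_sum_sub_mul_sum_le _ _ _ _ _ _ _ (fun i _ => sq_nonneg _) fun i hi =>
      abs_one_div_grid_integral_sq_sub_le hκ hσ₁ hσ₂ hσ₁b hσ₂b hM hi).trans_eq ?_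
    have hn' : (n : ℝ) ≠ 0 := by positivity
    rw [abs_neg, abs_of_pos (by positivity)]
    field_simp
  have hC₁₂ : |(1 / 2) * (∫ u in (0:ℝ)..1, (σ₀ u ^ 2 - σ₁ u ^ 2) / σ₁ u ^ 2) -
      (1 / 2) * ∫ u in (0:ℝ)..1, (σ₀ u ^ 2 - σ₂ u ^ 2) / σ₂ u ^ 2| ≤ K ^ 3 / κ ^ 4 * M := by
    rw [← mul_sub, abs_mul]
    have h := abs_integral_sq_sub_sq_div_sq_sub_le hκ zero_le_one hσ₀ hσ₁ hσ₂ hσ₀b hσ₁b hσ₂b hM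
    calc _ ≤ |(1 : ℝ) / 2| * (2 * K ^ 3 * M / κ ^ 4 * (1 - 0)) := by gcongr
      _ = K ^ 3 / κ ^ 4 * M := by rw [abs_of_pos (by norm_num)]; ring
  rw [hQ, hQ]
  refine (abs_abs_sub_abs_le_abs_sub _ _).trans ?_
  rw [add_sub_add_comm]
  exact (abs_add_le _ _).trans (add_le_add hT₁₂ hC₁₂)

theorem Qn_lipschitz_in_sigma (κ K : ℝ) (hκ : 0 < κ) (hκK : κ < K)
    (σ₀ σ₁ σ₂ : ℝ → ℝ) (hσ₀ : Measurable σ₀) (hσ₁ : Measurable σ₁)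
    (hσ₂ : Measurable σ₂)
    (hσ₀b : ∀ u ∈ Set.Icc (0:ℝ) 1, σ₀ u ∈ Set.Icc κ K)
    (hσ₁b : ∀ u ∈ Set.Icc (0:ℝ) 1, σ₁ u ∈ Set.Icc κ K)
    (hσ₂b : ∀ u ∈ Set.Icc (0:ℝ) 1, σ₂ u ∈ Set.Icc κ K)
    (X : ℝ → ℝ) (n : ℕ) (hn : 0 < n)
    (T : (ℝ → ℝ) → ℝ)
    (hT : ∀ σ : ℝ → ℝ, T σ =
      -(1 / (2 * (n : ℝ))) * ∑ i ∈ Finset.Icc 1 n,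
        (X ((i : ℝ) / n) - X (((i : ℝ) - 1) / n)) ^ 2 *
          (1 / (∫ u in ((i : ℝ) - 1) / n..(i : ℝ) / n, σ u ^ 2) -
           1 / (∫ u in ((i : ℝ) - 1) / n..(i : ℝ) / n, σ₀ u ^ 2)))
    (Q : (ℝ → ℝ) → ℝ)
    (hQ : ∀ σ : ℝ → ℝ, Q σ =
      |T σ + (1 / 2) * ∫ u in (0:ℝ)..1, (σ₀ u ^ 2 - σ u ^ 2) / σ u ^ 2|) :
    |Q σ₁ - Q σ₂| ≤
      (K / κ ^ 4) * (⨆ u : Set.Icc (0:ℝ) 1, |σ₁ u - σ₂ u|) *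
        (∑ i ∈ Finset.Icc 1 n, (X ((i : ℝ) / n) - X (((i : ℝ) - 1) / n)) ^ 2) +
      (K ^ 3 / κ ^ 4) * ⨆ u : Set.Icc (0:ℝ) 1, |σ₁ u - σ₂ u| :=
  Qn_lipschitz_in_sigma_general κ K hκ σ₀ σ₁ σ₂ hσ₀ hσ₁ hσ₂ hσ₀b hσ₁b hσ₂b X n hn T hT Q hQ
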